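/- arXiv:2602.21185 — 3 statements merged into one kernel-verified Lean document; each statement's English description precedes it below -/
import Mathlib

section
/- Consider a discretized process with times t(0) < t(1) < ⋯ < t(T) = 1 where the terminal marginal Ψ_1(· | x) = q_1(· | x) and each reverse transition is the superposition Ψ_{s|t}(· | x, z) = κ_t q_{s|t}(· | z, x) + (1 − κ_t) q_s(· | x) with q_{s|t} the Bayes posterior of a marginal-consistent forward process. Then by induction, the induced marginal at every time t(i) equals the forward marginal: Ψ_{t(i)}(· | x) = q_{t(i)}(· | x). -/
open Finset Set

/-! Once `Ψ` agrees with `q` at step `i + 1`, each of the two components of the superposition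
reproduces `q` at step `i`: the posterior by marginal consistency, the constant term because
`q` sums to one. Hence so does every mixture of them. -/

theorem sum_mul_superposition_eq {V R : Type*} [Fintype V] [CommRing R] {p b : V → R} {c : R}
    (κ : R) (hp : ∑ z, p z = 1) (hb : ∑ z, p z * b z = c) :
    ∑ z, p z * (κ * b z + (1 - κ) * c) = c :=
  calc ∑ z, p z * (κ * b z + (1 - κ) * c)
      = κ * ∑ z, p z * b z + (1 - κ) * c * ∑ z, p z := by
        simp only [mul_sum, ← sum_add_distrib]
        exact sum_congr rfl fun z _ => by ring
    _ = c := by rw [hb, hp]; ring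

theorem psi_marginals_eq_forward_marginals_general
    {V : Type*} [Fintype V] (T : ℕ)
    (q : ℕ → V → V → ℝ) (B : ℕ → V → V → V → ℝ) (κ : ℕ → ℝ)
    (hqsum : ∀ i, i ≤ T → ∀ x, ∑ z, q i z x = 1)
    (hBayes : ∀ i, 1 ≤ i → i ≤ T → ∀ w x, ∑ z, q i z x * B i w z x = q (i - 1) w x)
    (Ψ : ℕ → V → V → ℝ)
    (hΨT : ∀ w x, Ψ T w x = q T w x)
    (hrec : ∀ i, i < T → ∀ w x,
      Ψ i w x = ∑ z, Ψ (i + 1) z x * (κ (i + 1) * B (i + 1) w z x + (1 - κ (i + 1)) * q i w x)) :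
    ∀ i, i ≤ T → ∀ w x, Ψ i w x = q i w x := by
  intro i hi
  induction hi using Nat.decreasingInduction with
  | self => exact hΨT
  | of_succ k hk ih =>
    intro w x
    simp only [hrec k hk, ih]
    exact sum_mul_superposition_eq _ (hqsum _ hk x) (hBayes _ (Nat.le_add_left 1 k) hk w x)

/-- Downward induction: if the terminal marginal of the `Ψ`-process matches the forward
marginal and each reverse transition is a superposition of the Bayes posterior and the
forward marginal, then the `Ψ`-marginals equal the forward marginals at every time. -/
theorem psi_marginals_eq_forward_marginals
    {V : Type*} [Fintype V] (T : ℕ)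
    (q : ℕ → V → V → ℝ) (B : ℕ → V → V → V → ℝ) (κ : ℕ → ℝ)
    (hκ : ∀ i, κ i ∈ Icc (0 : ℝ) 1)
    (hqsum : ∀ i, i ≤ T → ∀ x, ∑ z, q i z x = 1)
    (hBayes : ∀ i, 1 ≤ i → i ≤ T → ∀ w x, ∑ z, q i z x * B i w z x = q (i - 1) w x)
    (Ψ : ℕ → V → V → ℝ)
    (hΨT : ∀ w x, Ψ T w x = q T w x)
    (hrec : ∀ i, i < T → ∀ w x,
      Ψ i w x = ∑ z, Ψ (i + 1) z x * (κ (i + 1) * B (i + 1) w z x + (1 - κ (i + 1)) * q i w x)) :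
    ∀ i, i ≤ T → ∀ w x, Ψ i w x = q i w x :=
  psi_marginals_eq_forward_marginals_general T q B κ hqsum hBayes Ψ hΨT hrec
end

section
/- Let π = m be a fixed one-hot 'mask' vector and define the MDM posterior q^{MDM}_{s|t}(· | z, x) equal to Cat(·; ((α_s − α_t)/(1 − α_t)) x + ((1 − α_s)/(1 − α_t)) z) when z = m and Cat(·; x) otherwise, where 0 < α_t < α_s ≤ 1. Then the superposition posterior Ψ_{s|t}(· | z) = κ_t q^{MDM}_{s|t}(· | z, x) + (1 − κ_t)[α_s x + (1 − α_s) m], with κ_t = 1 − σ_t/(1 − α_s), equals the ReMDM posterior: Cat(·; (1 − σ_t) x + σ_t m) when z ≠ m, and Cat(·; ((α_s − (1−σ_t)α_t)/(1 − α_t)) x + ((1 − α_s − σ_t α_t)/(1 − α_t)) m) when z = m. -/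
/-!
The weight `κ_t = 1 - σ_t / (1 - α_s)` is exactly the one for which the forward-marginal
component `(1 - κ_t) (α_s x + (1 - α_s) m)` puts mass `σ_t` on the mask, i.e.
`(1 - κ_t)(1 - α_s) = σ_t`. Given this single relation, both cases of the claim are linear
identities in `x` and `m`.
-/

open Set

theorem superposition_eq_remdm_unmasked {R : Type*} [CommRing R] {κ αs σ : R}
    (hκ : (1 - κ) * (1 - αs) = σ) (x m : R) :
    κ * x + (1 - κ) * (αs * x + (1 - αs) * m) = (1 - σ) * x + σ * m := by
  linear_combination (m - x) * hκ

theorem superposition_eq_remdm_masked {K : Type*} [Field K] {κ αs αt σ : K}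
    (hκ : (1 - κ) * (1 - αs) = σ) (hαt : 1 - αt ≠ 0) (x m : K) :
    κ * ((αs - αt) / (1 - αt) * x + (1 - αs) / (1 - αt) * m)
        + (1 - κ) * (αs * x + (1 - αs) * m)
      = (αs - (1 - σ) * αt) / (1 - αt) * x + (1 - αs - σ * αt) / (1 - αt) * m := by
  field_simp
  linear_combination (αt * x - αt * m) * hκ

theorem superposition_eq_remdm_general
    {Kv : ℕ} (x m z : Fin Kv → ℝ)
    (αs αt σ : ℝ) (hαt : αt ∈ Ioo (0 : ℝ) 1) (hαs : αs ∈ Ioo (0 : ℝ) 1) :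
    let κ : ℝ := 1 - σ / (1 - αs)
    let qMDM : Fin Kv → ℝ :=
      if z = m then
        (fun j => ((αs - αt) / (1 - αt)) * x j + ((1 - αs) / (1 - αt)) * m j)
      else x
    let Ψ : Fin Kv → ℝ := fun j => κ * qMDM j + (1 - κ) * (αs * x j + (1 - αs) * m j)
    (z ≠ m → ∀ j, Ψ j = (1 - σ) * x j + σ * m j) ∧
    (z = m → ∀ j,
      Ψ j = ((αs - (1 - σ) * αt) / (1 - αt)) * x j
            + ((1 - αs - σ * αt) / (1 - αt)) * m j) := by
  intro κ qMDM Ψ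
  have hκ : (1 - κ) * (1 - αs) = σ := by
    rw [sub_sub_cancel, div_mul_cancel₀ σ (sub_ne_zero.2 hαs.2.ne')]
  refine ⟨fun hzm j => ?_, fun hzm j => ?_⟩
  · simp only [Ψ, qMDM, if_neg hzm]
    exact superposition_eq_remdm_unmasked hκ (x j) (m j)
  · simp only [Ψ, qMDM, if_pos hzm]
    exact superposition_eq_remdm_masked hκ (sub_ne_zero.2 hαt.2.ne') (x j) (m j)

/-- With `κ_t = 1 - σ_t / (1 - α_s)`, the superposition of the MDM posterior with the
forward marginal `α_s x + (1 - α_s) m` equals the ReMDM posterior. -/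
theorem superposition_eq_remdm
    {Kv : ℕ} (x m z : Fin Kv → ℝ)
    (hx : ∃ a, x = fun j => if j = a then (1 : ℝ) else 0)
    (hm : ∃ a, m = fun j => if j = a then (1 : ℝ) else 0)
    (hxm : x ≠ m) (hz : z = x ∨ z = m)
    (αs αt σ : ℝ) (hαt : αt ∈ Ioo (0 : ℝ) 1) (hαs : αs ∈ Ioo (0 : ℝ) 1) (hlt : αt < αs)
    (hσ : σ ∈ Icc (0 : ℝ) (min 1 ((1 - αs) / αt))) :
    let κ : ℝ := 1 - σ / (1 - αs)
    let qMDM : Fin Kv → ℝ :=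
      if z = m then
        (fun j => ((αs - αt) / (1 - αt)) * x j + ((1 - αs) / (1 - αt)) * m j)
      else x
    let Ψ : Fin Kv → ℝ := fun j => κ * qMDM j + (1 - κ) * (αs * x j + (1 - αs) * m j)
    (z ≠ m → ∀ j, Ψ j = (1 - σ) * x j + σ * m j) ∧
    (z = m → ∀ j,
      Ψ j = ((αs - (1 - σ) * αt) / (1 - αt)) * x j
            + ((1 - αs - σ * αt) / (1 - αt)) * m j) :=
  superposition_eq_remdm_general x m z αs αt σ hαt hαs
end

section
/- In the masked-diffusion setting with 0 < α_t < α_s ≤ 1, the ReMDM remasking probability σ_t yields a valid probability distribution (all mixture coefficients in the ReMDM posterior are nonnegative and sum to one) if and only if 0 ≤ σ_t ≤ min{1, (1 − α_s)/α_t}. -/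
/-! The weights for `z ≠ m` are valid exactly when `σ ∈ [0, 1]`. For `z = m` the two weights
always sum to one, and the unmasking weight is nonnegative as soon as `σ ≥ 0` because
`(1 - σ) α_t ≤ α_t < α_s`; so the only new constraint is that the masking weight be
nonnegative, i.e. `σ α_t ≤ 1 - α_s`. -/

section ReMDM

variable {αs αt σ : ℝ}

lemma le_min_one_div_iff {a b : ℝ} (hb : 0 < b) : σ ≤ min 1 (a / b) ↔ σ ≤ 1 ∧ σ * b ≤ a := by
  rw [le_min_iff, le_div_iff₀ hb]

lemma remdm_unmask_coeff_nonneg (hαt : 0 ≤ αt) (hlt : αt < αs) (hαt1 : αt ≤ 1) (hσ : 0 ≤ σ) :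
    0 ≤ (αs - (1 - σ) * αt) / (1 - αt) :=
  div_nonneg (by nlinarith) (by linarith)

lemma remdm_mask_coeff_nonneg_iff (hαt1 : αt < 1) :
    0 ≤ (1 - αs - σ * αt) / (1 - αt) ↔ σ * αt ≤ 1 - αs := by
  rw [le_div_iff₀ (sub_pos.mpr hαt1), zero_mul, sub_sub, sub_nonneg, le_sub_iff_add_le']

lemma remdm_coeff_sum (hαt1 : αt ≠ 1) :
    (αs - (1 - σ) * αt) / (1 - αt) + (1 - αs - σ * αt) / (1 - αt) = 1 := by
  rw [← add_div, div_eq_one_iff_eq (sub_ne_zero.mpr hαt1.symm)]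
  ring

end ReMDM

/-- The ReMDM posterior is a valid probability distribution (all mixture coefficients
nonnegative and summing to one, in both the `z ≠ m` and `z = m` cases) if and only if
`0 ≤ σ_t ≤ min 1 ((1 - α_s) / α_t)`. -/
theorem remdm_valid_iff (αs αt σ : ℝ) (h1 : 0 < αt) (h2 : αt < αs) (h3 : αs < 1) :
    (0 ≤ 1 - σ ∧ 0 ≤ σ ∧ (1 - σ) + σ = 1 ∧
      0 ≤ (αs - (1 - σ) * αt) / (1 - αt) ∧
      0 ≤ (1 - αs - σ * αt) / (1 - αt) ∧
      (αs - (1 - σ) * αt) / (1 - αt) + (1 - αs - σ * αt) / (1 - αt) = 1)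
    ↔ (0 ≤ σ ∧ σ ≤ min 1 ((1 - αs) / αt)) := by
  have hαt1 : αt < 1 := h2.trans h3
  rw [le_min_one_div_iff h1, remdm_mask_coeff_nonneg_iff hαt1]
  constructor
  · rintro ⟨hσ1, hσ, -, -, hmask, -⟩
    exact ⟨hσ, sub_nonneg.mp hσ1, hmask⟩
  · rintro ⟨hσ, hσ1, hmask⟩
    exact ⟨sub_nonneg.mpr hσ1, hσ, sub_add_cancel 1 σ,
      remdm_unmask_coeff_nonneg h1.le h2 hαt1.le hσ, hmask, remdm_coeff_sum hαt1.ne⟩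
end
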